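/- There is no empty 6-circuit with at least 3 faces in which the spanning face f_e shares edges with only one other face. -/

import Mathlib

/-!
Let `G` be the set of faces other than `f_e` and its only neighbour `f`; it is nonempty. Since the
graph is simple and the dual loopless, every face has at least three darts, so the faces of `G`
carry at least `3 |G|` darts. Let `T` be the darts of `f` whose edge is not shared with `f_e`.
Following the edge of such a dart leads into a face of `G`, and into each one at most once, because
a dual multi-edge must involve `f_e`; so `|T| ≤ |G|`. Finally every dart `d` in a face of `G` is
`σ t` or `ρ t` for some `t ∈ T`: if `σ d` is not on `f`, then `ρ⁻¹ d` is on `f`, for otherwise the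
vertex of `d`, which lies on `f_e`, would carry six darts, i.e. have six distinct neighbours among
at most six vertices. Hence `3 |G| ≤ 2 |T| ≤ 2 |G|`, which is absurd.
-/

/-- A combinatorial map (connected graph cellularly embedded in an orientable surface),
given by a set of darts `D`, the edge involution `σ` and the rotation `ρ`. -/
structure CombMap where
  D : Type
  fin : Finite D
  σ : Equiv.Perm D
  ρ : Equiv.Perm D
  σ_invol : ∀ d, σ (σ d) = d
  σ_fixfree : ∀ d, σ d ≠ d
  conn : ∀ d d' : D, ∃ g ∈ Subgroup.closure ({σ, ρ} : Set (Equiv.Perm D)), g d = d'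

attribute [instance] CombMap.fin

namespace CombMap

variable (M : CombMap)

/-- The face permutation. -/
def φ : Equiv.Perm M.D := M.ρ * M.σ

def vSetoid : Setoid M.D :=
  ⟨M.ρ.SameCycle, ⟨fun _ => Equiv.Perm.SameCycle.refl _ _,
    Equiv.Perm.SameCycle.symm, Equiv.Perm.SameCycle.trans⟩⟩

def eSetoid : Setoid M.D :=
  ⟨M.σ.SameCycle, ⟨fun _ => Equiv.Perm.SameCycle.refl _ _,
    Equiv.Perm.SameCycle.symm, Equiv.Perm.SameCycle.trans⟩⟩

def fSetoid : Setoid M.D :=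
  ⟨M.φ.SameCycle, ⟨fun _ => Equiv.Perm.SameCycle.refl _ _,
    Equiv.Perm.SameCycle.symm, Equiv.Perm.SameCycle.trans⟩⟩

/-- Vertices are orbits of `ρ`. -/
def Vertex := Quotient M.vSetoid
/-- Edges are orbits of `σ`. -/
def Edge := Quotient M.eSetoid
/-- Faces are orbits of `φ`. -/
def Face := Quotient M.fSetoid

instance : Finite M.Vertex := Quotient.finite _
instance : Finite M.Edge := Quotient.finite _
instance : Finite M.Face := Quotient.finite _

def vtx (d : M.D) : M.Vertex := Quotient.mk M.vSetoid d
def edg (d : M.D) : M.Edge := Quotient.mk M.eSetoid d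
def fce (d : M.D) : M.Face := Quotient.mk M.fSetoid d

noncomputable def nV : ℕ := Nat.card M.Vertex
noncomputable def nE : ℕ := Nat.card M.Edge
noncomputable def nF : ℕ := Nat.card M.Face

/-- The size of a face: the length of its facial walk, i.e. the number of darts in it. -/
noncomputable def faceSize (f : M.Face) : ℕ := Nat.card {d : M.D // M.fce d = f}

/-- The degree of a vertex: the number of darts emanating from it. -/
noncomputable def degree (v : M.Vertex) : ℕ := Nat.card {d : M.D // M.vtx d = v}

/-- The face excess `Σ_f (d(f) - 3)`. -/
noncomputable def faceExcess : ℤ := ∑ᶠ f : M.Face, ((M.faceSize f : ℤ) - 3)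

/-- The underlying graph of the map is simple: no loops, no multiple edges. -/
def Simple : Prop :=
  (∀ d, M.vtx d ≠ M.vtx (M.σ d)) ∧
  ∀ d d', M.vtx d = M.vtx d' → M.vtx (M.σ d) = M.vtx (M.σ d') → M.edg d = M.edg d'

/-- The dual has no loops. -/
def DualLoopFree : Prop := ∀ d, M.fce d ≠ M.fce (M.σ d)

/-- The dual is simple: no loops and no multiple edges. -/
def DualSimple : Prop :=
  M.DualLoopFree ∧
  ∀ d d', M.fce d = M.fce d' → M.fce (M.σ d) = M.fce (M.σ d') → M.edg d = M.edg d'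

/-- The underlying simple graph on the vertices of the map. -/
def graph : SimpleGraph M.Vertex :=
  SimpleGraph.fromRel (fun a b => ∃ d, M.vtx d = a ∧ M.vtx (M.σ d) = b)

/-- The underlying simple graph of the dual map, on the faces of the map. -/
def dualGraph : SimpleGraph M.Face :=
  SimpleGraph.fromRel (fun a b => ∃ d, M.fce d = a ∧ M.fce (M.σ d) = b)

/-- Vertex `v` lies on the face `f`. -/
def VertexOnFace (v : M.Vertex) (f : M.Face) : Prop := ∃ d, M.fce d = f ∧ M.vtx d = v

/-- Faces `f` and `f'` share an edge. -/
def FaceAdj (f f' : M.Face) : Prop := ∃ d, M.fce d = f ∧ M.fce (M.σ d) = f'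

end CombMap

/-- `k`-connectivity of a graph: more than `k` vertices, and removing fewer than `k`
vertices never disconnects it. -/
def KConn {α : Type} (H : SimpleGraph α) (k : ℕ) : Prop :=
  k < Nat.card α ∧ ∀ S : Set α, S.ncard < k → (H.induce Sᶜ).Connected

namespace CombMap

variable (M : CombMap)

/-- An empty `k`-circuit: a map on at most `k` vertices with a spanning face `f_e` of
size `k`, whose underlying graph is simple, whose dual has no loops, and all of whose
dual multi-edges are incident with `f_e`. -/
def IsEmptyCircuit (k : ℕ) (fe : M.Face) : Prop :=
  M.nV ≤ k ∧ M.faceSize fe = k ∧ (∀ v : M.Vertex, M.VertexOnFace v fe) ∧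
  M.Simple ∧ M.DualLoopFree ∧
  ∀ d d', M.fce d = M.fce d' → M.fce (M.σ d) = M.fce (M.σ d') → M.edg d ≠ M.edg d' →
    (M.fce d = fe ∨ M.fce (M.σ d) = fe)

/-- An empty `k`-pair: a map on at most `k` vertices with two spanning faces
`f_e, f_e'` with `d(f_e)+d(f_e') = k` not sharing an edge, whose underlying graph is
simple, whose dual has no loops, and all of whose dual multi-edges are incident with
`f_e` or `f_e'`. -/
def IsEmptyPair (k : ℕ) (fe fe' : M.Face) : Prop :=
  M.nV ≤ k ∧ fe ≠ fe' ∧ M.faceSize fe + M.faceSize fe' = k ∧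
  (∀ v : M.Vertex, M.VertexOnFace v fe ∨ M.VertexOnFace v fe') ∧
  ¬ M.FaceAdj fe fe' ∧
  M.Simple ∧ M.DualLoopFree ∧
  ∀ d d', M.fce d = M.fce d' → M.fce (M.σ d) = M.fce (M.σ d') → M.edg d ≠ M.edg d' →
    (M.fce d = fe ∨ M.fce d = fe' ∨ M.fce (M.σ d) = fe ∨ M.fce (M.σ d) = fe')

end CombMap



namespace Equiv.Perm

variable {α : Type*} {p : Perm α} {z w : α}

theorem SameCycle.eq_or_eq_apply_of_apply_apply_eq [Finite α] (hz : p (p z) = z)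
    (h : p.SameCycle z w) : w = z ∨ w = p z := by
  obtain ⟨n, rfl⟩ := h.exists_nat_pow_eq
  clear h
  induction n with
  | zero => simp
  | succ n ih => rcases ih with h | h <;> simp [pow_succ', h, hz]

theorem ncard_inv_apply_self_apply (h : p (p z) ≠ z) : ({p⁻¹ z, z, p z} : Set α).ncard = 3 := by
  have hz : p z ≠ z := fun h' => h (by rw [h', h'])
  refine Set.ncard_eq_three.mpr ⟨_, _, _, ?_, ?_, ?_, rfl⟩
  · rwa [Ne, inv_eq_iff_eq, eq_comm]
  · rw [Ne, inv_eq_iff_eq]; exact Ne.symm h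
  · exact Ne.symm hz

end Equiv.Perm

namespace CombMap

variable {M : CombMap}

@[simp]
theorem fce_φ (d : M.D) : M.fce (M.φ d) = M.fce d :=
  (Quotient.sound (⟨1, by simp⟩ : M.φ.SameCycle d (M.φ d))).symm

theorem fce_ρ (d : M.D) : M.fce (M.ρ d) = M.fce (M.σ d) := by
  simpa [φ, M.σ_invol] using fce_φ (M.σ d)

@[simp]
theorem fce_σ_ρ_inv (d : M.D) : M.fce (M.σ (M.ρ⁻¹ d)) = M.fce d := by
  rw [← fce_ρ]
  simp

@[simp]
theorem vtx_ρ (d : M.D) : M.vtx (M.ρ d) = M.vtx d :=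
  Quotient.sound (⟨-1, by simp⟩ : M.ρ.SameCycle (M.ρ d) d)

@[simp]
theorem vtx_φ (d : M.D) : M.vtx (M.φ d) = M.vtx (M.σ d) :=
  vtx_ρ _

@[simp]
theorem vtx_ρ_inv (d : M.D) : M.vtx (M.ρ⁻¹ d) = M.vtx d := by
  simpa using (vtx_ρ (M.ρ⁻¹ d)).symm

theorem eq_or_eq_σ_of_edg_eq {d d' : M.D} (h : M.edg d = M.edg d') : d' = d ∨ d' = M.σ d :=
  (Quotient.exact h : M.σ.SameCycle d d').eq_or_eq_apply_of_apply_apply_eq (M.σ_invol d)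

theorem Simple.eq_of_vtx_eq (hs : M.Simple) {d d' : M.D} (h : M.vtx d = M.vtx d')
    (hσ : M.vtx (M.σ d) = M.vtx (M.σ d')) : d = d' := by
  rcases eq_or_eq_σ_of_edg_eq (hs.2 d d' h hσ) with rfl | rfl
  · rfl
  · exact absurd h (hs.1 d)

theorem DualLoopFree.eq_of_edg_eq (hl : M.DualLoopFree) {d d' : M.D} (he : M.edg d = M.edg d')
    (hf : M.fce d = M.fce d') : d = d' := by
  rcases eq_or_eq_σ_of_edg_eq he with rfl | rfl
  · rfl
  · exact absurd hf (hl d)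

theorem Simple.φ_ne (hs : M.Simple) (d : M.D) : M.φ d ≠ d := fun h =>
  hs.1 d (by rw [← vtx_φ, h])

theorem Simple.φ_φ_ne (hs : M.Simple) (hl : M.DualLoopFree) (d : M.D) : M.φ (M.φ d) ≠ d := by
  intro h
  -- `σ (φ d)` has the same ends as `d`, so it is `d`, and then `φ d = σ d` is a dual loop
  have hd : M.σ (M.φ d) = d :=
    (hs.eq_of_vtx_eq (by rw [← vtx_φ (M.φ d), h]) (by rw [M.σ_invol, vtx_φ])).symm
  have hφ : M.φ d = M.σ d := by simpa [M.σ_invol] using congrArg M.σ hd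
  exact hl d (by rw [← hφ, fce_φ])

theorem Simple.three_le_ncard_fce_eq (hs : M.Simple) (hl : M.DualLoopFree) (d : M.D) :
    3 ≤ {e | M.fce e = M.fce d}.ncard := by
  have h3 : ({d, M.φ d, M.φ (M.φ d)} : Set M.D).ncard = 3 :=
    Set.ncard_eq_three.mpr ⟨_, _, _, (hs.φ_ne d).symm, (hs.φ_φ_ne hl d).symm,
      (hs.φ_ne (M.φ d)).symm, rfl⟩
  rw [← h3]
  exact Set.ncard_le_ncard (by simp [Set.insert_subset_iff])

theorem Simple.three_mul_ncard_le_ncard_preimage (hs : M.Simple) (hl : M.DualLoopFree)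
    (S : Set M.Face) : 3 * S.ncard ≤ (M.fce ⁻¹' S).ncard := by
  classical
  have := Fintype.ofFinite M.D
  have := Fintype.ofFinite M.Face
  rw [Set.ncard_eq_toFinset_card' S, Set.ncard_eq_toFinset_card']
  refine Finset.mul_card_image_le_card_of_maps_to (f := M.fce) (by simp) 3 fun g hg => ?_
  obtain ⟨d, rfl⟩ : ∃ d, M.fce d = g := Quotient.exists_rep g
  calc 3 ≤ {e | M.fce e = M.fce d}.ncard := hs.three_le_ncard_fce_eq hl d
    _ = _ := by
      rw [Set.ncard_eq_toFinset_card']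
      congr 1
      ext e
      simp_all

theorem Simple.degree_lt_nV (hs : M.Simple) (v : M.Vertex) : M.degree v < M.nV := by
  classical
  have := Fintype.ofFinite M.D
  have := Fintype.ofFinite M.Vertex
  rw [degree, nV, Nat.card_eq_fintype_card, Nat.card_eq_fintype_card]
  refine Fintype.card_lt_of_injective_of_notMem (fun d => M.vtx (M.σ d.1)) ?_ (b := v) ?_
  · rintro ⟨d, rfl⟩ ⟨d', hd'⟩ h
    exact Subtype.ext (hs.eq_of_vtx_eq hd'.symm h)
  · rintro ⟨⟨d, rfl⟩, h⟩
    exact hs.1 d h.symm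

section OneNeighbour

variable {fe f : M.Face}

theorem fce_of_fce_σ_eq (honly : ∀ d, M.fce d = fe → M.fce (M.σ d) = f) {d : M.D}
    (hd : M.fce (M.σ d) = fe) : M.fce d = f := by
  simpa [M.σ_invol] using honly _ hd

theorem fce_ρ_eq (honly : ∀ d, M.fce d = fe → M.fce (M.σ d) = f) {d : M.D}
    (hd : M.fce d = fe) : M.fce (M.ρ d) = f := by
  rw [fce_ρ]
  exact honly d hd

theorem fce_ρ_inv_eq (honly : ∀ d, M.fce d = fe → M.fce (M.σ d) = f) {d : M.D}
    (hd : M.fce d = fe) : M.fce (M.ρ⁻¹ d) = f :=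
  fce_of_fce_σ_eq honly (by rw [fce_σ_ρ_inv, hd])

theorem fce_ρ_inv_eq_of_fce_ne_of_fce_σ_ne (hnV : M.nV ≤ 6)
    (hspan : ∀ v, M.VertexOnFace v fe) (hs : M.Simple)
    (honly : ∀ d, M.fce d = fe → M.fce (M.σ d) = f) {y : M.D}
    (hyfe : M.fce y ≠ fe) (hyf : M.fce y ≠ f) (hσy : M.fce (M.σ y) ≠ f) :
    M.fce (M.ρ⁻¹ y) = f := by
  by_contra hx
  -- otherwise the vertex of `y` has six distinct darts: `ρ⁻¹ a, a, ρ a` for a dart `a` of `fe`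
  -- there, and `ρ⁻¹ y, y, ρ y`, none of which lies on `fe` or `f`
  obtain ⟨a, ha, hav⟩ := hspan (M.vtx y)
  have hσyfe : M.fce (M.σ y) ≠ fe := fun h => hyf (fce_of_fce_σ_eq honly h)
  set A : Set M.D := {M.ρ⁻¹ a, a, M.ρ a} with hA
  set Y : Set M.D := {M.ρ⁻¹ y, y, M.ρ y} with hY
  have hAface : ∀ d ∈ A, M.fce d = fe ∨ M.fce d = f := by
    rintro d (rfl | rfl | rfl)
    exacts [.inr (fce_ρ_inv_eq honly ha), .inl ha, .inr (fce_ρ_eq honly ha)]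
  have hYface : ∀ d ∈ Y, M.fce d ≠ fe ∧ M.fce d ≠ f := by
    have hxfe : M.fce (M.ρ⁻¹ y) ≠ fe := fun h => hyf (by simpa using fce_ρ_eq honly h)
    rintro d (rfl | rfl | rfl)
    exacts [⟨hxfe, hx⟩, ⟨hyfe, hyf⟩, by rw [fce_ρ]; exact ⟨hσyfe, hσy⟩]
  have hcycle : M.ρ.SameCycle a y := Quotient.exact hav
  have hA3 : A.ncard = 3 := Equiv.Perm.ncard_inv_apply_self_apply fun h => by
    rcases hcycle.eq_or_eq_apply_of_apply_apply_eq h with rfl | rfl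
    · exact hyfe ha
    · exact hyf (fce_ρ_eq honly ha)
  have hY3 : Y.ncard = 3 := Equiv.Perm.ncard_inv_apply_self_apply fun h => by
    rcases hcycle.symm.eq_or_eq_apply_of_apply_apply_eq h with rfl | rfl
    · exact hyfe ha
    · exact hσyfe (by rw [← fce_ρ, ha])
  have hdisj : Disjoint A Y := Set.disjoint_left.mpr fun d hdA hdY => by
    rcases hAface d hdA with h | h
    exacts [(hYface d hdY).1 h, (hYface d hdY).2 h]
  have h6 : 6 ≤ M.degree (M.vtx y) :=
    calc 6 = (A ∪ Y).ncard := by rw [Set.ncard_union_eq hdisj, hA3, hY3]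
      _ ≤ {d | M.vtx d = M.vtx y}.ncard :=
        Set.ncard_le_ncard (by simp [hA, hY, Set.insert_subset_iff, hav, -Equiv.Perm.coe_inv])
      _ = M.degree (M.vtx y) := (Nat.card_coe_set_eq _).symm
  have := hs.degree_lt_nV (M.vtx y)
  omega

theorem ne_of_forall_fce_σ_eq (hl : M.DualLoopFree)
    (honly : ∀ d, M.fce d = fe → M.fce (M.σ d) = f) (hsize : M.faceSize fe ≠ 0) : fe ≠ f := by
  obtain ⟨⟨d, hd⟩⟩ := (Nat.card_ne_zero.mp hsize).1
  rintro rfl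
  exact hl d (by rw [honly d hd, hd])

theorem ncard_preimage_compl_le_two_mul (hnV : M.nV ≤ 6)
    (hspan : ∀ v, M.VertexOnFace v fe) (hs : M.Simple)
    (honly : ∀ d, M.fce d = fe → M.fce (M.σ d) = f) :
    (M.fce ⁻¹' {fe, f}ᶜ).ncard ≤ 2 * {d | M.fce d = f ∧ M.fce (M.σ d) ≠ fe}.ncard := by
  set T := {d | M.fce d = f ∧ M.fce (M.σ d) ≠ fe}
  have hsub : M.fce ⁻¹' {fe, f}ᶜ ⊆ M.σ '' T ∪ M.ρ '' T := by
    intro d hd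
    simp only [Set.mem_preimage, Set.mem_compl_iff, Set.mem_insert_iff, Set.mem_singleton_iff,
      not_or] at hd
    by_cases hσd : M.fce (M.σ d) = f
    · exact .inl ⟨M.σ d, ⟨hσd, by rw [M.σ_invol]; exact hd.1⟩, M.σ_invol d⟩
    · refine .inr ⟨M.ρ⁻¹ d, ⟨?_, by rw [fce_σ_ρ_inv]; exact hd.1⟩, by simp⟩
      exact fce_ρ_inv_eq_of_fce_ne_of_fce_σ_ne hnV hspan hs honly hd.1 hd.2 hσd
  calc _ ≤ (M.σ '' T ∪ M.ρ '' T).ncard := Set.ncard_le_ncard hsub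
    _ ≤ (M.σ '' T).ncard + (M.ρ '' T).ncard := Set.ncard_union_le _ _
    _ = 2 * T.ncard := by
      rw [Set.ncard_image_of_injective _ M.σ.injective,
        Set.ncard_image_of_injective _ M.ρ.injective, two_mul]

theorem IsEmptyCircuit.ncard_darts_le_ncard_faces {k : ℕ} (hcirc : M.IsEmptyCircuit k fe)
    (hfe : fe ≠ f) :
    {d | M.fce d = f ∧ M.fce (M.σ d) ≠ fe}.ncard ≤ ({fe, f}ᶜ : Set M.Face).ncard := by
  obtain ⟨-, -, -, -, hl, hmulti⟩ := hcirc
  refine Set.ncard_le_ncard_of_injOn (fun d => M.fce (M.σ d)) ?_ ?_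
  · rintro d ⟨hd, hσd⟩
    simp only [Set.mem_compl_iff, Set.mem_insert_iff, Set.mem_singleton_iff, not_or]
    exact ⟨hσd, fun h => hl d (hd.trans h.symm)⟩
  · rintro d ⟨hd, hσd⟩ d' ⟨hd', -⟩ h
    refine hl.eq_of_edg_eq (not_not.mp fun hne => ?_) (hd.trans hd'.symm)
    rcases hmulti d d' (hd.trans hd'.symm) h hne with h' | h'
    exacts [hfe (h'.symm.trans hd), hσd h']

end OneNeighbour

end CombMap

/-- There is no empty 6-circuit with at least 3 faces in which the spanning face
`f_e` shares edges with only one other face. -/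
theorem no_empty_six_circuit_one_neighbour
    (M : CombMap) (fe f : M.Face)
    (hcirc : M.IsEmptyCircuit 6 fe)
    (hF : 3 ≤ M.nF)
    (honly : ∀ d, M.fce d = fe → M.fce (M.σ d) = f) :
    False := by
  have ⟨hnV, hsize, hspan, hs, hl, _⟩ := hcirc
  have hfe : fe ≠ f := CombMap.ne_of_forall_fce_σ_eq hl honly (by rw [hsize]; norm_num)
  have hothers : 1 ≤ ({fe, f}ᶜ : Set M.Face).ncard := by
    have := Set.ncard_compl_add_ncard ({fe, f} : Set M.Face)
    rw [Set.ncard_pair hfe, ← CombMap.nF] at this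
    omega
  have hT := hcirc.ncard_darts_le_ncard_faces hfe
  have hU := hs.three_mul_ncard_le_ncard_preimage hl {fe, f}ᶜ
  have hUT := CombMap.ncard_preimage_compl_le_two_mul hnV hspan hs honly
  omega
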